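/- For every finite simple connected graph G on n vertices and λ ∈ (0,1), the maximum over vertices u of the exponential transmission t_λ(u) = Σ_{v≠u} d(u,v)·λ^{d(u,v)} is at most max over D ∈ {1,…,n−1} of (Σ_{i=1}^{D} i·λ^i) + (n−D−1)·D·λ^D. -/

import Mathlib

open SimpleGraph Finset

noncomputable def tExp {V : Type*} [Fintype V] (G : SimpleGraph V) (lam : ℝ) (u : V) : ℝ :=
  letI := Classical.decEq V
  ∑ v ∈ Finset.univ.erase u, (G.dist u v : ℝ) * lam ^ (G.dist u v)

noncomputable def numSP {V : Type*} [Fintype V] (G : SimpleGraph V) (k l : V) : ℕ :=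
  letI := Classical.decEq V
  letI := Classical.decRel G.Adj
  (G.finsetWalkLength (G.dist k l) k l).card

noncomputable def numSPedge {V : Type*} [Fintype V] (G : SimpleGraph V) (u v k l : V) : ℕ :=
  letI := Classical.decEq V
  letI := Classical.decRel G.Adj
  ((G.finsetWalkLength (G.dist k l) k l).filter (fun p => s(u, v) ∈ p.edges)).card

noncomputable def bExp {V : Type*} [Fintype V] (G : SimpleGraph V) (lam : ℝ) (u v : V) : ℝ :=
  (1 / 2) * ∑ k : V, ∑ l : V, ((numSPedge G u v k l : ℝ) / (numSP G k l)) * lam ^ (G.dist k l)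

noncomputable def cExp {V : Type*} [Fintype V] (G : SimpleGraph V) (lam : ℝ) (u : V) : ℝ :=
  letI := Classical.decRel G.Adj
  ∑ v ∈ G.neighborFinset u, bExp G lam u v

/-!
Sort the vertices `v ≠ u` by their distance `d(u,v) ∈ {1, …, e}`, `e` the eccentricity of `u`.
Every layer is nonempty, since a shortest walk from `u` to a farthest vertex passes through every
distance. Put `g i = i λ^i` and let `D` maximise `g` on `{1, …, e}`. Keeping one vertex per layer,
`t_λ(u)` is `∑_{i ≤ e} g i` plus `n - 1 - e` further terms, each at most `g D`; the terms `g i` with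
`D < i ≤ e` are at most `g D` as well. Hence `t_λ(u) ≤ ∑_{i ≤ D} g i + (n - 1 - D) g D` with
`1 ≤ D ≤ e ≤ n - 1`.
-/

namespace Finset

lemma sum_comp_le_of_image_eq_Icc {ι : Type*} [DecidableEq ι] {s : Finset ι} {f : ι → ℕ}
    {g : ℕ → ℝ} {D E : ℕ} (himage : s.image f = Icc 1 E) (hDE : D ≤ E)
    (hmax : ∀ i ∈ Icc 1 E, g i ≤ g D) :
    ∑ v ∈ s, g (f v) ≤ ∑ i ∈ Icc 1 D, g i + (#s - D) * g D := by
  have hgap : ∀ i ∈ Icc 1 E, 0 ≤ g D - g i := fun i hi => sub_nonneg.mpr (hmax i hi)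
  have hlayers : ∑ i ∈ Icc 1 E, (g D - g i) ≤ ∑ v ∈ s, (g D - g (f v)) :=
    himage ▸ sum_image_le_of_nonneg (himage ▸ hgap)
  have hprefix : ∑ i ∈ Icc 1 D, (g D - g i) ≤ ∑ i ∈ Icc 1 E, (g D - g i) :=
    sum_le_sum_of_subset_of_nonneg (Icc_subset_Icc_right hDE) fun i hi _ => hgap i hi
  simp only [sum_sub_distrib, sum_const, nsmul_eq_mul, Nat.card_Icc, add_tsub_cancel_right]
    at hlayers hprefix
  linarith

end Finset

namespace SimpleGraph

variable {V : Type*} {G : SimpleGraph V}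

lemma Reachable.exists_dist_eq_of_le {u w : V} (h : G.Reachable u w) {i : ℕ}
    (hi : i ≤ G.dist u w) : ∃ v, G.dist u v = i := by
  obtain ⟨p, hp⟩ := h.exists_walk_length_eq_dist
  refine ⟨p.getVert i, ?_⟩
  rw [← length_eq_dist_of_subwalk hp (p.isSubwalk_take i), Walk.take_length]
  omega

lemma dist_lt_card [Fintype V] (u v : V) : G.dist u v < Fintype.card V := by
  by_cases h : G.Reachable u v
  · obtain ⟨p, hp, hlen⟩ := h.exists_path_of_dist
    exact hlen ▸ hp.length_lt
  · rw [dist_eq_zero_of_not_reachable h]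
    exact Fintype.card_pos_iff.mpr ⟨u⟩

end SimpleGraph

theorem stmt4 {V : Type*} [Fintype V] (G : SimpleGraph V) (hG : G.Connected)
    (n : ℕ) (hn : n = Fintype.card V) (h2 : 2 ≤ n)
    (lam : ℝ) (u : V) :
    tExp G lam u ≤
      (Finset.Icc 1 (n - 1)).sup' (Finset.nonempty_Icc.mpr (by omega))
        (fun D => (∑ i ∈ Finset.Icc 1 D, (i : ℝ) * lam ^ i)
          + ((n : ℝ) - D - 1) * D * lam ^ D) := by
  classical
  set S := univ.erase u
  have hS : #S = n - 1 := by rw [card_erase_of_mem (mem_univ u), card_univ, hn]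
  obtain ⟨w, hwS, hw⟩ := S.exists_max_image (G.dist u) (card_pos.mp (by omega))
  have himage : S.image (G.dist u) = Icc 1 (G.dist u w) := by
    ext i
    simp only [mem_image, mem_Icc]
    constructor
    · rintro ⟨v, hv, rfl⟩
      exact ⟨hG.pos_dist_of_ne (ne_of_mem_erase hv).symm, hw v hv⟩
    · rintro ⟨hi1, hiE⟩
      obtain ⟨v, rfl⟩ := (hG u w).exists_dist_eq_of_le hiE
      refine ⟨v, mem_erase.mpr ⟨fun hvu => ?_, mem_univ v⟩, rfl⟩
      simp [hvu] at hi1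
  obtain ⟨D, hD, hmax⟩ := (Icc 1 (G.dist u w)).exists_max_image (fun i => (i : ℝ) * lam ^ i)
    (himage ▸ image_nonempty.mpr ⟨w, hwS⟩)
  have hDn : D ∈ Icc 1 (n - 1) := by
    have := G.dist_lt_card u w
    simp only [mem_Icc] at hD ⊢
    omega
  calc tExp G lam u
      ≤ ∑ i ∈ Icc 1 D, (i : ℝ) * lam ^ i + (#S - D) * (D * lam ^ D) :=
        sum_comp_le_of_image_eq_Icc himage (mem_Icc.mp hD).2 hmax
    _ = ∑ i ∈ Icc 1 D, (i : ℝ) * lam ^ i + ((n : ℝ) - D - 1) * D * lam ^ D := by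
        rw [hS, Nat.cast_sub (by omega), Nat.cast_one]
        ring
    _ ≤ _ := le_sup' (fun D : ℕ => (∑ i ∈ Icc 1 D, (i : ℝ) * lam ^ i)
          + ((n : ℝ) - D - 1) * D * lam ^ D) hDn
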